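/- arXiv:2301.01331 — 3 statements merged into one kernel-verified Lean document; each statement's English description precedes it below -/
import Mathlib

section
/- FC(5, 8) ≥ 21; that is, there exists a family of 20 distinct 5-element subsets of {1,…,8} whose universe equals {1,…,8} that is Non-FC. -/
set_option maxRecDepth 40000


/-- The universe of a family of finite sets: the union of all its members. -/
def famUniverse (A : Finset (Finset ℕ)) : Finset ℕ := A.sup id

/-- A family is union-closed if it is nonempty and closed under pairwise unions. -/
def UnionClosed (F : Finset (Finset ℕ)) : Prop :=
  F.Nonempty ∧ ∀ A ∈ F, ∀ B ∈ F, A ∪ B ∈ F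

/-- A family `A` is FC (Frankl-Complete) if for every union-closed family `F`
containing `A`, some element of the universe of `A` belongs to at least half
of the members of `F`. -/
def IsFC (A : Finset (Finset ℕ)) : Prop :=
  ∀ F : Finset (Finset ℕ), UnionClosed F → A ⊆ F →
    ∃ x ∈ famUniverse A, F.card ≤ 2 * (F.filter (fun S => x ∈ S)).card

/-- `IsKFamily k n A` means `A` is a family of (distinct) `k`-element subsets of
`[n] = {1, …, n}` whose universe equals `[n]`. -/
def IsKFamily (k n : ℕ) (A : Finset (Finset ℕ)) : Prop :=
  (∀ S ∈ A, S.card = k ∧ S ⊆ Finset.Icc 1 n) ∧ famUniverse A = Finset.Icc 1 n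

/-- The set of positive integers `m` such that every family of `m` distinct
`k`-element subsets of `[n]` with universe `[n]` is FC.  `FC(k, n)` is the least
element of this set, when it exists. -/
def FCwitnesses (k n : ℕ) : Set ℕ :=
  {m : ℕ | 0 < m ∧ ∀ A : Finset (Finset ℕ), A.card = m → IsKFamily k n A → IsFC A}

namespace FCaux
open Finset

def E8 : Finset ℕ := Finset.Icc 1 8
def P8 : Finset (Finset ℕ) := E8.powerset
def TT : Finset ℕ := Finset.Icc 9 63

def tau (s : ℕ) : Finset ℕ := if s = 8 then ∅ else TT.erase s

def zOf (s : ℕ) : ℕ := 3 + (s - 40) / 4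

def cone (S : Finset ℕ) : Prop := ({1, 2} : Finset ℕ) ⊆ S ∧ 5 ≤ S.card

instance : DecidablePred cone := fun _ => instDecidableAnd

def L (s : ℕ) : Finset (Finset ℕ) :=
  if s = 8 then P8.filter (fun S => S = ∅ ∨ cone S)
  else if s ≤ 39 then P8.filter (fun S => S ⊆ Finset.Icc 3 8 ∨ cone S)
  else if s ≤ 63 then P8.filter (fun S => zOf s ∉ S ∨ (cone S ∧ zOf s ∈ S))
  else P8

def myF : Finset (Finset ℕ) := (Finset.Icc 8 64).biUnion (fun s => (L s).image (fun S => S ∪ tau s))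

def myA : Finset (Finset ℕ) := P8.filter (fun S => ({1, 2} : Finset ℕ) ⊆ S ∧ S.card = 5)

/-- join index -/
def j (s s' : ℕ) : ℕ := if s = 8 then s' else if s' = 8 then s else if s = s' then s else 64

lemma mem_L_sub {s : ℕ} {S : Finset ℕ} (h : S ∈ L s) : S ⊆ E8 := by
  unfold L at h
  split_ifs at h <;> first
    | exact mem_powerset.1 (mem_filter.1 h).1
    | exact mem_powerset.1 h

lemma tau_sub (s : ℕ) : tau s ⊆ TT := by
  unfold tau; split_ifs
  · exact empty_subset _
  · exact erase_subset _ _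

lemma E8_TT_disj : ∀ a : ℕ, a ∈ E8 → a ∉ TT := by decide

lemma cone_union_left {S S' : Finset ℕ} (h : cone S) : cone (S ∪ S') :=
  ⟨h.1.trans subset_union_left, h.2.trans (card_le_card subset_union_left)⟩

lemma cone_union_right {S S' : Finset ℕ} (h : cone S') : cone (S ∪ S') :=
  ⟨h.1.trans subset_union_right, h.2.trans (card_le_card subset_union_right)⟩

lemma tau_union {s s' : ℕ} (hs : 8 ≤ s) (hs64 : s ≤ 64) (hs' : 8 ≤ s') (hs64' : s' ≤ 64) :
    tau s ∪ tau s' = tau (j s s') := by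
  unfold j
  split_ifs with h1 h2 h3
  · subst h1; simp [tau]
  · subst h2; simp [tau]
  · subst h3; simp
  · -- s ≠ 8, s' ≠ 8, s ≠ s'
    have e64 : (64 : ℕ) ∉ TT := by decide
    unfold tau
    rw [if_neg h1, if_neg h2, if_neg (by omega : (64:ℕ) ≠ 8)]
    rw [erase_eq_of_notMem e64]
    ext a
    simp only [mem_union, mem_erase]
    constructor
    · rintro (⟨_, h⟩ | ⟨_, h⟩) <;> assumption
    · intro ha
      by_cases h : a = s
      · right; exact ⟨by omega, ha⟩
      · left; exact ⟨h, ha⟩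

lemma cone_of_card5 {S : Finset ℕ} (h1 : ({1, 2} : Finset ℕ) ⊆ S) (h2 : S.card = 5) : cone S :=
  ⟨h1, by omega⟩

lemma mem_L_of_cone {s : ℕ} {S : Finset ℕ} (hS : S ⊆ E8) (hc : cone S) : S ∈ L s := by
  unfold L
  split_ifs
  · exact mem_filter.2 ⟨mem_powerset.2 hS, Or.inr hc⟩
  · exact mem_filter.2 ⟨mem_powerset.2 hS, Or.inr hc⟩
  · by_cases hz : zOf s ∈ S
    · exact mem_filter.2 ⟨mem_powerset.2 hS, Or.inr ⟨hc, hz⟩⟩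
    · exact mem_filter.2 ⟨mem_powerset.2 hS, Or.inl hz⟩
  · exact mem_powerset.2 hS

lemma L_union {s s' : ℕ} {S S' : Finset ℕ} (hs : 8 ≤ s) (hs64 : s ≤ 64) (hs' : 8 ≤ s')
    (hs64' : s' ≤ 64) (h : S ∈ L s) (h' : S' ∈ L s') : S ∪ S' ∈ L (j s s') := by
  have hSe : S ⊆ E8 := mem_L_sub h
  have hS'e : S' ⊆ E8 := mem_L_sub h'
  have hUe : S ∪ S' ⊆ E8 := union_subset hSe hS'e
  unfold j
  split_ifs with h1 h2 h3
  · -- s = 8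
    subst h1
    unfold L at h
    rw [if_pos rfl] at h
    rcases (mem_filter.1 h).2 with rfl | hc
    · rwa [empty_union]
    · exact mem_L_of_cone hUe (cone_union_left hc)
  · -- s' = 8
    subst h2
    unfold L at h'
    rw [if_pos rfl] at h'
    rcases (mem_filter.1 h').2 with rfl | hc
    · rwa [union_empty]
    · exact mem_L_of_cone hUe (cone_union_right hc)
  · -- s = s'
    subst h3
    unfold L at h h' ⊢
    rw [if_neg h1] at h h' ⊢
    split_ifs at h h' ⊢ with hA hB
    · rcases (mem_filter.1 h).2 with hc | hc
      · rcases (mem_filter.1 h').2 with hc' | hc'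
        · exact mem_filter.2 ⟨mem_powerset.2 hUe, Or.inl (union_subset hc hc')⟩
        · exact mem_filter.2 ⟨mem_powerset.2 hUe, Or.inr (cone_union_right hc')⟩
      · exact mem_filter.2 ⟨mem_powerset.2 hUe, Or.inr (cone_union_left hc)⟩
    · rcases (mem_filter.1 h).2 with hc | hc
      · rcases (mem_filter.1 h').2 with hc' | hc'
        · exact mem_filter.2 ⟨mem_powerset.2 hUe,
            Or.inl (by simp only [mem_union]; tauto)⟩
        · exact mem_filter.2 ⟨mem_powerset.2 hUe,
            Or.inr ⟨cone_union_right hc'.1, mem_union_right _ hc'.2⟩⟩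
      · exact mem_filter.2 ⟨mem_powerset.2 hUe,
          Or.inr ⟨cone_union_left hc.1, mem_union_left _ hc.2⟩⟩
    · exact mem_powerset.2 hUe
  · -- join to top
    unfold L
    rw [if_neg (by omega : (64:ℕ) ≠ 8), if_neg (by omega : ¬ (64:ℕ) ≤ 39),
      if_neg (by omega : ¬ (64:ℕ) ≤ 63)]
    exact mem_powerset.2 hUe

lemma mem_myF {X : Finset ℕ} :
    X ∈ myF ↔ ∃ s, (8 ≤ s ∧ s ≤ 64) ∧ ∃ S ∈ L s, S ∪ tau s = X := by
  unfold myF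
  simp only [mem_biUnion, mem_image, mem_Icc]

lemma unionClosed_myF : UnionClosed myF := by
  constructor
  · refine ⟨∅, mem_myF.2 ⟨8, ⟨le_refl _, by omega⟩, ∅, ?_, by simp [tau]⟩⟩
    unfold L
    rw [if_pos rfl]
    exact mem_filter.2 ⟨mem_powerset.2 (empty_subset _), Or.inl rfl⟩
  · intro X hX Y hY
    obtain ⟨s, ⟨hs, hs64⟩, S, hS, rfl⟩ := mem_myF.1 hX
    obtain ⟨s', ⟨hs', hs64'⟩, S', hS', rfl⟩ := mem_myF.1 hY
    have key : S ∪ tau s ∪ (S' ∪ tau s') = (S ∪ S') ∪ tau (j s s') := by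
      rw [union_union_union_comm, tau_union hs hs64 hs' hs64']
    rw [key]
    refine mem_myF.2 ⟨j s s', ⟨?_, ?_⟩, S ∪ S', L_union hs hs64 hs' hs64' hS hS', rfl⟩
    · unfold j; split_ifs <;> omega
    · unfold j; split_ifs <;> omega

lemma myA_sub_myF : myA ⊆ myF := by
  intro a ha
  have h := mem_filter.1 ha
  refine mem_myF.2 ⟨8, ⟨le_refl _, by omega⟩, a, ?_, by simp [tau]⟩
  unfold L
  rw [if_pos rfl]
  exact mem_filter.2 ⟨h.1, Or.inr (cone_of_card5 h.2.1 h.2.2)⟩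

-- counting

lemma inter_TT {s : ℕ} {S : Finset ℕ} (hS : S ⊆ E8) : (S ∪ tau s) ∩ TT = tau s := by
  ext a
  simp only [mem_inter, mem_union]
  constructor
  · rintro ⟨h1 | h1, h2⟩
    · exact absurd h2 (E8_TT_disj a (hS h1))
    · exact h1
  · intro h
    exact ⟨Or.inr h, tau_sub s h⟩

lemma inter_E8 {s : ℕ} {S : Finset ℕ} (hS : S ⊆ E8) : (S ∪ tau s) ∩ E8 = S := by
  ext a
  simp only [mem_inter, mem_union]
  constructor
  · rintro ⟨h1 | h1, h2⟩
    · exact h1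
    · exact absurd (tau_sub s h1) (E8_TT_disj a h2)
  · intro h
    exact ⟨Or.inl h, hS h⟩

lemma erase_TT_ne_empty (s : ℕ) : TT.erase s ≠ ∅ := by
  intro h
  have h9 : (9 : ℕ) ∈ TT := by decide
  have h10 : (10 : ℕ) ∈ TT := by decide
  by_cases hc : s = 9
  · have : (10 : ℕ) ∈ TT.erase s := mem_erase.2 ⟨by omega, h10⟩
    rw [h] at this; exact absurd this (notMem_empty _)
  · have : (9 : ℕ) ∈ TT.erase s := mem_erase.2 ⟨fun hh => hc hh.symm, h9⟩
    rw [h] at this; exact absurd this (notMem_empty _)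

lemma tau_inj {s s' : ℕ} (hs : 8 ≤ s) (hs64 : s ≤ 64) (hs' : 8 ≤ s') (hs64' : s' ≤ 64)
    (h : tau s = tau s') : s = s' := by
  by_contra hne
  unfold tau at h
  by_cases h1 : s = 8 <;> by_cases h2 : s' = 8
  · exact hne (h1.trans h2.symm)
  · rw [if_pos h1, if_neg h2] at h
    exact erase_TT_ne_empty s' h.symm
  · rw [if_neg h1, if_pos h2] at h
    exact erase_TT_ne_empty s h
  · rw [if_neg h1, if_neg h2] at h
    by_cases hsT : s ∈ TT
    · have hmem : s ∈ TT.erase s' := mem_erase.2 ⟨hne, hsT⟩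
      rw [← h] at hmem
      exact absurd hmem (notMem_erase s TT)
    · have hs'T : s' ∈ TT := by
        have hA : s = 64 := by
          simp only [TT, mem_Icc] at hsT; omega
        simp only [TT, mem_Icc]
        omega
      have hmem : s' ∈ TT.erase s := mem_erase.2 ⟨fun hh => hne hh.symm, hs'T⟩
      rw [h] at hmem
      exact absurd hmem (notMem_erase s' TT)

lemma chunk_injOn (s : ℕ) : Set.InjOn (fun S => S ∪ tau s) (L s : Set (Finset ℕ)) := by
  intro S hS S' hS' h
  have h' : S ∪ tau s = S' ∪ tau s := h
  have h1 : (S ∪ tau s) ∩ E8 = S := inter_E8 (mem_L_sub hS)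
  have h2 : (S' ∪ tau s) ∩ E8 = S' := inter_E8 (mem_L_sub hS')
  rw [← h1, ← h2, h']

lemma chunk_disjoint {s s' : ℕ} (hs : 8 ≤ s) (hs64 : s ≤ 64) (hs' : 8 ≤ s') (hs64' : s' ≤ 64)
    (hne : s ≠ s') :
    Disjoint ((L s).image (fun S => S ∪ tau s)) ((L s').image (fun S => S ∪ tau s')) := by
  rw [disjoint_left]
  rintro X hX hX'
  obtain ⟨S, hS, rfl⟩ := mem_image.1 hX
  obtain ⟨S', hS', hEq⟩ := mem_image.1 hX'
  have t1 : (S ∪ tau s) ∩ TT = tau s := inter_TT (mem_L_sub hS)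
  have t2 : (S' ∪ tau s') ∩ TT = tau s' := inter_TT (mem_L_sub hS')
  rw [hEq] at t2
  exact hne (tau_inj hs hs64 hs' hs64' (t1.symm.trans t2))

lemma card_myF : myF.card = ∑ s ∈ Finset.Icc 8 64, (L s).card := by
  unfold myF
  rw [card_biUnion]
  · exact Finset.sum_congr rfl fun s _ => card_image_of_injOn (chunk_injOn s)
  · intro s hs s' hs' hne
    rw [mem_coe, mem_Icc] at hs hs'
    exact chunk_disjoint hs.1 hs.2 hs'.1 hs'.2 hne

lemma cnt_myF (x : ℕ) (hx : x ∈ E8) :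
    (myF.filter (fun S => x ∈ S)).card
      = ∑ s ∈ Finset.Icc 8 64, ((L s).filter (fun S => x ∈ S)).card := by
  unfold myF
  rw [filter_biUnion, card_biUnion]
  · refine Finset.sum_congr rfl fun s _ => ?_
    rw [filter_image]
    have hcong : (L s).filter (fun S => x ∈ S ∪ tau s) = (L s).filter (fun S => x ∈ S) := by
      refine filter_congr fun S hS => ?_
      simp only [mem_union]
      constructor
      · rintro (h | h)
        · exact h
        · exact absurd (tau_sub s h) (E8_TT_disj x hx)
      · exact Or.inl
    rw [hcong]
    exact card_image_of_injOn ((chunk_injOn s).mono (by exact_mod_cast filter_subset _ _))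
  · intro s hs s' hs' hne
    rw [mem_coe, mem_Icc] at hs hs'
    exact Disjoint.mono (filter_subset _ _) (filter_subset _ _)
      (chunk_disjoint hs.1 hs.2 hs'.1 hs'.2 hne)

-- numeric layer cards
def cL (s : ℕ) : ℕ := if s = 8 then 43 else if s ≤ 39 then 106 else if s ≤ 63 then 154 else 256

def gL (x s : ℕ) : ℕ :=
  if s = 8 then (if x ≤ 2 then 42 else 26)
  else if s ≤ 39 then (if x ≤ 2 then 42 else 58)
  else if s ≤ 63 then (if x ≤ 2 then 90 else if x = zOf s then 26 else 79)
  else 128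

def Kz (z : ℕ) : Finset (Finset ℕ) := P8.filter (fun S => z ∉ S ∨ (cone S ∧ z ∈ S))

lemma L_mid (s : ℕ) (h1 : 40 ≤ s) (h2 : s ≤ 63) : L s = Kz (zOf s) := by
  unfold L Kz
  rw [if_neg (by omega), if_neg (by omega), if_pos (by omega)]

lemma zOf_range (s : ℕ) (h1 : 40 ≤ s) (h2 : s ≤ 63) : 3 ≤ zOf s ∧ zOf s ≤ 8 := by
  unfold zOf; omega

lemma card_Kz (z : ℕ) (h1 : 3 ≤ z) (h2 : z ≤ 8) : (Kz z).card = 154 := by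
  interval_cases z <;> decide

lemma cnt_Kz (z x : ℕ) (h1 : 3 ≤ z) (h2 : z ≤ 8) (h3 : 1 ≤ x) (h4 : x ≤ 8) :
    ((Kz z).filter (fun S => x ∈ S)).card = (if x ≤ 2 then 90 else if x = z then 26 else 79) := by
  interval_cases z <;> interval_cases x <;> decide

lemma card_L_eq (s : ℕ) (hs : s ∈ Finset.Icc 8 64) : (L s).card = cL s := by
  rw [mem_Icc] at hs
  unfold cL
  by_cases h8 : s = 8
  · subst h8; rw [if_pos rfl]; decide
  rw [if_neg h8]
  by_cases h39 : s ≤ 39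
  · rw [if_pos h39]
    unfold L
    rw [if_neg h8, if_pos h39]
    decide
  rw [if_neg h39]
  by_cases h63 : s ≤ 63
  · rw [if_pos h63]
    rw [L_mid s (by omega) h63]
    exact card_Kz _ (zOf_range s (by omega) h63).1 (zOf_range s (by omega) h63).2
  · rw [if_neg h63]
    unfold L
    rw [if_neg h8, if_neg h39, if_neg h63]
    decide

lemma cnt_L_eq (x : ℕ) (h3 : 1 ≤ x) (h4 : x ≤ 8) (s : ℕ) (hs : s ∈ Finset.Icc 8 64) :
    ((L s).filter (fun S => x ∈ S)).card = gL x s := by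
  rw [mem_Icc] at hs
  unfold gL
  by_cases h8 : s = 8
  · subst h8
    rw [if_pos rfl]
    unfold L
    rw [if_pos rfl]
    interval_cases x <;> decide
  rw [if_neg h8]
  by_cases h39 : s ≤ 39
  · rw [if_pos h39]
    unfold L
    rw [if_neg h8, if_pos h39]
    interval_cases x <;> decide
  rw [if_neg h39]
  by_cases h63 : s ≤ 63
  · rw [if_pos h63]
    rw [L_mid s (by omega) h63]
    exact cnt_Kz _ _ (zOf_range s (by omega) h63).1 (zOf_range s (by omega) h63).2 h3 h4
  · rw [if_neg h63]
    unfold L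
    rw [if_neg h8, if_neg h39, if_neg h63]
    interval_cases x <;> decide

lemma card_myF_val : myF.card = 7281 := by
  rw [card_myF, Finset.sum_congr rfl card_L_eq]
  decide

lemma cnt_myF_val (x : ℕ) (h3 : 1 ≤ x) (h4 : x ≤ 8) :
    (myF.filter (fun S => x ∈ S)).card ≤ 3636 := by
  rw [cnt_myF x (by simp [E8, mem_Icc]; omega),
    Finset.sum_congr rfl (cnt_L_eq x h3 h4)]
  interval_cases x <;> decide

lemma myA_card : myA.card = 20 := by decide

lemma myA_kfamily : IsKFamily 5 8 myA := by
  constructor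
  · decide
  · decide

lemma famUniverse_myA : famUniverse myA = Finset.Icc 1 8 := myA_kfamily.2

lemma not_isFC_myA : ¬ IsFC myA := by
  intro h
  obtain ⟨x, hx, hle⟩ := h myF unionClosed_myF myA_sub_myF
  rw [famUniverse_myA, mem_Icc] at hx
  have h1 := card_myF_val
  have h2 := cnt_myF_val x hx.1 hx.2
  omega

end FCaux


/-- FC(5, 8) ≥ 21: there is a Non-FC family of 20 distinct 5-element subsets of
{1, …, 8} with universe {1, …, 8}. -/
theorem FC_lower_bound_5_8 :
    ∃ A : Finset (Finset ℕ), A.card = 20 ∧ IsKFamily 5 8 A ∧ ¬ IsFC A :=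
  ⟨FCaux.myA, FCaux.myA_card, FCaux.myA_kfamily, FCaux.not_isFC_myA⟩
end

section
/- FC(6, 10) ≥ 71; that is, there exists a family of 70 distinct 6-element subsets of {1,…,10} whose universe equals {1,…,10} that is Non-FC. -/
set_option maxRecDepth 4000

open Finset

namespace FCproof

/-! ### Basic objects -/

def U10 : Finset ℕ := Finset.Icc 1 10
def Zt : Finset ℕ := Finset.Icc 11 210

def Hstar : Finset (Finset ℕ) :=
  U10.powerset.filter (fun S => 6 ≤ S.card ∧ 1 ∈ S ∧ 2 ∈ S)

def wOf (i : ℕ) : ℕ := if i ≤ 62 then 1 else if i ≤ 114 then 2 else 3 + (i - 115) / 12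

def cls (w : ℕ) : Finset (Finset ℕ) :=
  (U10.erase w).powerset ∪ Hstar.filter (fun S => w ∈ S)

def FF : Finset (Finset ℕ) :=
  (Hstar ∪ U10.powerset.image (fun X => X ∪ Zt)) ∪
    Zt.biUnion (fun i => (cls (wOf i)).image (fun X => X ∪ Zt.erase i))

def cH (x : ℕ) : ℕ := if x ≤ 2 then 163 else 99
def nW (w : ℕ) : ℕ := if w ≤ 2 then 52 else 12
def cK (x w : ℕ) : ℕ :=
  if x = w then (if w ≤ 2 then 163 else 99)
  else 256 + (if x ≤ 2 ∧ w ≤ 2 then 163 else if x ≤ 2 ∨ w ≤ 2 then 99 else 57)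

/-! ### Small membership facts -/

lemma mem_U10 {x : ℕ} : x ∈ U10 ↔ 1 ≤ x ∧ x ≤ 10 := by simp [U10]

lemma mem_Zt {x : ℕ} : x ∈ Zt ↔ 11 ≤ x ∧ x ≤ 210 := by simp [Zt]

lemma mem_Hstar {S : Finset ℕ} :
    S ∈ Hstar ↔ S ⊆ U10 ∧ (6 ≤ S.card ∧ 1 ∈ S ∧ 2 ∈ S) := by
  simp [Hstar]

lemma wOf_mem {i : ℕ} (hi : i ∈ Zt) : wOf i ∈ Finset.Icc 1 10 := by
  rw [mem_Zt] at hi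
  simp only [wOf, Finset.mem_Icc]
  split_ifs <;> omega

/-! ### Closure lemmas -/

lemma Hstar_absorb {S X : Finset ℕ} (hS : S ∈ Hstar) (hX : X ⊆ U10) :
    S ∪ X ∈ Hstar := by
  rw [mem_Hstar] at hS ⊢
  refine ⟨union_subset hS.1 hX, le_trans hS.2.1 (card_le_card subset_union_left),
    mem_union_left _ hS.2.2.1, mem_union_left _ hS.2.2.2⟩

lemma cls_sub {w : ℕ} {X : Finset ℕ} (h : X ∈ cls w) : X ⊆ U10 := by
  rcases mem_union.mp h with h | h
  · exact (mem_powerset.mp h).trans (erase_subset _ _)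
  · exact (mem_Hstar.mp (mem_filter.mp h).1).1

lemma cls_union {w : ℕ} {X Y : Finset ℕ} (hX : X ∈ cls w) (hY : Y ∈ cls w) :
    X ∪ Y ∈ cls w := by
  rcases mem_union.mp hX with h1 | h1
  · rcases mem_union.mp hY with h2 | h2
    · exact mem_union_left _ (mem_powerset.mpr
        (union_subset (mem_powerset.mp h1) (mem_powerset.mp h2)))
    · rcases mem_filter.mp h2 with ⟨h2H, h2w⟩
      refine mem_union_right _ (mem_filter.mpr ⟨?_, mem_union_right _ h2w⟩)
      rw [union_comm]
      exact Hstar_absorb h2H (cls_sub hX)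
  · rcases mem_filter.mp h1 with ⟨h1H, h1w⟩
    exact mem_union_right _ (mem_filter.mpr
      ⟨Hstar_absorb h1H (cls_sub hY), mem_union_left _ h1w⟩)

lemma Hstar_absorb_cls {w : ℕ} {S X : Finset ℕ} (hS : S ∈ Hstar) (hX : X ∈ cls w) :
    S ∪ X ∈ cls w := by
  by_cases hw : w ∈ S ∪ X
  · exact mem_union_right _ (mem_filter.mpr ⟨Hstar_absorb hS (cls_sub hX), hw⟩)
  · exact mem_union_left _ (mem_powerset.mpr (subset_erase.mpr
      ⟨union_subset (mem_Hstar.mp hS).1 (cls_sub hX), hw⟩))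

lemma mem_FF {S : Finset ℕ} :
    S ∈ FF ↔ S ∈ Hstar ∨ (∃ X, X ⊆ U10 ∧ X ∪ Zt = S) ∨
      (∃ i ∈ Zt, ∃ X ∈ cls (wOf i), X ∪ Zt.erase i = S) := by
  simp [FF, mem_union, mem_biUnion, mem_image, mem_powerset, or_assoc]

/-! ### Set identities -/

lemma union_union (X Y T T' : Finset ℕ) :
    (X ∪ T) ∪ (Y ∪ T') = (X ∪ Y) ∪ (T ∪ T') := by
  ext a; simp only [mem_union]; tauto

lemma erase_union_erase {i j : ℕ} (hij : i ≠ j) :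
    Zt.erase i ∪ Zt.erase j = Zt := by
  ext a
  simp only [mem_union, mem_erase, Zt, Finset.mem_Icc]
  omega

lemma Zt_union_erase (i : ℕ) : Zt ∪ Zt.erase i = Zt :=
  union_eq_left.mpr (erase_subset _ _)

lemma erase_union_Zt (i : ℕ) : Zt.erase i ∪ Zt = Zt :=
  union_eq_right.mpr (erase_subset _ _)

lemma X_recover {X T : Finset ℕ} (hX : X ⊆ U10) (hT : T ⊆ Zt) :
    (X ∪ T).filter (fun a => a ≤ 10) = X := by
  ext a
  simp only [mem_filter, mem_union]
  constructor
  · rintro ⟨h | h, ha⟩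
    · exact h
    · have := mem_Zt.mp (hT h); omega
  · intro h
    exact ⟨Or.inl h, (mem_U10.mp (hX h)).2⟩

lemma union_inj {T X X' : Finset ℕ} (hT : T ⊆ Zt) (hX : X ⊆ U10) (hX' : X' ⊆ U10)
    (h : X ∪ T = X' ∪ T) : X = X' := by
  rw [← X_recover hX hT, ← X_recover hX' hT, h]

/-! ### FF is union-closed -/

lemma FF_nonempty : FF.Nonempty := by
  refine ⟨Zt, ?_⟩
  rw [mem_FF]
  exact Or.inr (Or.inl ⟨∅, empty_subset _, by simp⟩)

lemma FF_unionClosed : UnionClosed FF := by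
  refine ⟨FF_nonempty, ?_⟩
  intro S hS T hT
  rw [mem_FF] at hS hT ⊢
  rcases hS with hS | ⟨X, hX, rfl⟩ | ⟨i, hi, X, hX, rfl⟩
  · rcases hT with hT | ⟨Y, hY, rfl⟩ | ⟨j, hj, Y, hY, rfl⟩
    · exact Or.inl (Hstar_absorb hS (mem_Hstar.mp hT).1)
    · refine Or.inr (Or.inl ⟨S ∪ Y, union_subset (mem_Hstar.mp hS).1 hY, ?_⟩)
      rw [← union_assoc]
    · refine Or.inr (Or.inr ⟨j, hj, S ∪ Y, Hstar_absorb_cls hS hY, ?_⟩)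
      rw [← union_assoc]
  · rcases hT with hT | ⟨Y, hY, rfl⟩ | ⟨j, hj, Y, hY, rfl⟩
    · refine Or.inr (Or.inl ⟨X ∪ T, union_subset hX (mem_Hstar.mp hT).1, ?_⟩)
      rw [union_right_comm]
    · refine Or.inr (Or.inl ⟨X ∪ Y, union_subset hX hY, ?_⟩)
      rw [union_union, union_self]
    · refine Or.inr (Or.inl ⟨X ∪ Y, union_subset hX (cls_sub hY), ?_⟩)
      rw [union_union, Zt_union_erase]
  · rcases hT with hT | ⟨Y, hY, rfl⟩ | ⟨j, hj, Y, hY, rfl⟩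
    · refine Or.inr (Or.inr ⟨i, hi, X ∪ T, ?_, ?_⟩)
      · rw [union_comm]; exact Hstar_absorb_cls hT hX
      · rw [union_right_comm]
    · refine Or.inr (Or.inl ⟨X ∪ Y, union_subset (cls_sub hX) hY, ?_⟩)
      rw [union_union, erase_union_Zt]
    · by_cases hij : i = j
      · subst hij
        refine Or.inr (Or.inr ⟨i, hi, X ∪ Y, cls_union hX hY, ?_⟩)
        rw [union_union, union_self]
      · refine Or.inr (Or.inl ⟨X ∪ Y, union_subset (cls_sub hX) (cls_sub hY), ?_⟩)
        rw [union_union, erase_union_erase hij]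

/-! ### Counting machinery -/

lemma peel (Y : Finset ℕ) {x : ℕ} (hx : x ∈ Y) (q : Finset ℕ → Prop) [DecidablePred q] :
    ((Y.powerset).filter (fun S => x ∈ S ∧ q S)).card
      = ((Y.erase x).powerset.filter (fun S => q (insert x S))).card := by
  refine card_bij' (fun S _ => S.erase x) (fun S _ => insert x S) ?_ ?_ ?_ ?_
  · intro S hS
    rcases mem_filter.mp hS with ⟨hP, hxS, hq⟩
    rw [mem_powerset] at hP
    refine mem_filter.mpr ⟨mem_powerset.mpr (erase_subset_erase _ hP), ?_⟩
    rwa [insert_erase hxS]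
  · intro S hS
    rcases mem_filter.mp hS with ⟨hP, hq⟩
    rw [mem_powerset] at hP
    refine mem_filter.mpr ⟨mem_powerset.mpr (insert_subset hx (hP.trans (erase_subset _ _))), ?_, hq⟩
    exact mem_insert_self _ _
  · intro S hS
    exact insert_erase (mem_filter.mp hS).2.1
  · intro S hS
    apply erase_insert
    intro hxS
    have := (mem_powerset.mp (mem_filter.mp hS).1) hxS
    exact (mem_erase.mp this).1 rfl

lemma peelMem (Y : Finset ℕ) {x : ℕ} (hx : x ∈ Y) (p : Finset ℕ → Prop) [DecidablePred p]
    (q : Finset ℕ → Prop) [DecidablePred q]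
    (hq : ∀ S ⊆ Y.erase x, (p (insert x S) ↔ q S)) :
    ((Y.powerset).filter (fun S => x ∈ S ∧ p S)).card
      = ((Y.erase x).powerset.filter q).card := by
  rw [peel Y hx p]
  apply congrArg
  apply filter_congr
  intro S hS
  exact hq S (mem_powerset.mp hS)

lemma thresh (Y : Finset ℕ) (k : ℕ) :
    ((Y.powerset).filter (fun S => k ≤ S.card)).card
      = ∑ j ∈ Finset.Icc k Y.card, Y.card.choose j := by
  have he : (Y.powerset).filter (fun S => k ≤ S.card)
      = (Finset.Icc k Y.card).biUnion (fun j => Y.powersetCard j) := by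
    ext S
    simp only [mem_filter, mem_powerset, mem_biUnion, Finset.mem_Icc, mem_powersetCard]
    constructor
    · rintro ⟨hS, hk⟩
      exact ⟨S.card, ⟨hk, card_le_card hS⟩, hS, rfl⟩
    · rintro ⟨j, ⟨hjk, _⟩, hS, rfl⟩
      exact ⟨hS, hjk⟩
  rw [he, card_biUnion]
  · exact sum_congr rfl fun j _ => card_powersetCard j Y
  · intro j _ j' _ hjj
    rw [Function.onFun, disjoint_left]
    intro S hS hS'
    rw [mem_powersetCard] at hS hS'
    exact hjj (hS.2 ▸ hS'.2 ▸ rfl)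

lemma threshC (Y : Finset ℕ) (k c : ℕ) :
    ((Y.powerset).filter (fun S => k ≤ S.card + c)).card
      = ∑ j ∈ Finset.Icc (k - c) Y.card, Y.card.choose j := by
  have he : (Y.powerset).filter (fun S => k ≤ S.card + c)
      = (Y.powerset).filter (fun S => k - c ≤ S.card) := by
    apply filter_congr; intro S _; omega
  rw [he, thresh]

lemma cube_mem_count (Y : Finset ℕ) {x : ℕ} (hx : x ∈ Y) :
    ((Y.powerset).filter (fun S => x ∈ S)).card = 2 ^ (Y.card - 1) := by
  have h1 : (Y.powerset).filter (fun S => x ∈ S)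
      = (Y.powerset).filter (fun S => x ∈ S ∧ (fun _ : Finset ℕ => True) S) := by
    simp
  rw [h1, peel Y hx, Finset.filter_true, card_powerset, card_erase_of_mem hx]

-- auxiliary membership facts
lemma one_mem_U10 : (1 : ℕ) ∈ U10 := by simp [U10]
lemma two_mem_e1 : (2 : ℕ) ∈ U10.erase 1 := by simp [U10]
lemma w_mem_e12 {w : ℕ} (h3 : 3 ≤ w) (h10 : w ≤ 10) : w ∈ (U10.erase 1).erase 2 := by
  simp [U10, Finset.mem_Icc, mem_erase]; omega
lemma x_mem_e12w {x w : ℕ} (h3 : 3 ≤ x) (h10 : x ≤ 10) (hxw : x ≠ w) :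
    x ∈ ((U10.erase 1).erase 2).erase w := by
  simp [U10, Finset.mem_Icc, mem_erase]; omega

lemma card_e12 : ((U10.erase 1).erase 2).card = 8 := by decide
lemma card_e12w {w : ℕ} (h3 : 3 ≤ w) (h10 : w ≤ 10) :
    (((U10.erase 1).erase 2).erase w).card = 7 := by
  rw [card_erase_of_mem (w_mem_e12 h3 h10), card_e12]
lemma card_e12wx {x w : ℕ} (h3 : 3 ≤ x) (h10 : x ≤ 10) (hxw : x ≠ w)
    (hw3 : 3 ≤ w) (hw10 : w ≤ 10) :
    ((((U10.erase 1).erase 2).erase w).erase x).card = 6 := by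
  rw [card_erase_of_mem (by simp [U10, Finset.mem_Icc, mem_erase]; omega), card_e12w hw3 hw10]

lemma not_mem_of_sub_erase {x : ℕ} {S Y : Finset ℕ} (h : S ⊆ Y.erase x) : x ∉ S :=
  fun hx => (mem_erase.mp (h hx)).1 rfl


lemma HBlow {x : ℕ} (hx : x = 1 ∨ x = 2) :
    (Hstar.filter (fun S => x ∈ S)).card = Hstar.card := by
  rw [filter_true_of_mem]
  intro S hS
  rcases hx with rfl | rfl
  · exact (mem_Hstar.mp hS).2.2.1
  · exact (mem_Hstar.mp hS).2.2.2

lemma HA : Hstar.card = 163 := by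
  have e1 : Hstar = U10.powerset.filter (fun S => 1 ∈ S ∧ (2 ∈ S ∧ 6 ≤ S.card + 0)) := by
    apply filter_congr; intro S _; constructor
    · rintro ⟨h, h1, h2⟩; exact ⟨h1, h2, by omega⟩
    · rintro ⟨h1, h2, h⟩; exact ⟨by omega, h1, h2⟩
  rw [e1,
    peelMem U10 one_mem_U10 _ (fun S => 2 ∈ S ∧ 6 ≤ S.card + 1) (by
      intro S hS
      rw [card_insert_of_notMem (not_mem_of_sub_erase hS)]
      simp only [mem_insert]
      have h21 : (2:ℕ) ≠ 1 := by omega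
      tauto),
    peelMem _ two_mem_e1 _ (fun S => 6 ≤ S.card + 2) (by
      intro S hS
      rw [card_insert_of_notMem (not_mem_of_sub_erase hS)]
      all_goals omega),
    threshC, card_e12]
  decide

lemma HB {x : ℕ} (h3 : 3 ≤ x) (h10 : x ≤ 10) :
    (Hstar.filter (fun S => x ∈ S)).card = 99 := by
  have hx1 : x ≠ 1 := by omega
  have hx2 : x ≠ 2 := by omega
  have h21 : (2:ℕ) ≠ 1 := by omega
  have e0 : Hstar.filter (fun S => x ∈ S)
      = U10.powerset.filter (fun S => 1 ∈ S ∧ (2 ∈ S ∧ (x ∈ S ∧ 6 ≤ S.card + 0))) := by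
    rw [Hstar, filter_filter]
    apply filter_congr; intro S _; constructor
    · rintro ⟨⟨h, h1, h2⟩, hx⟩; exact ⟨h1, h2, hx, by omega⟩
    · rintro ⟨h1, h2, hx, h⟩; exact ⟨⟨by omega, h1, h2⟩, hx⟩
  rw [e0,
    peelMem U10 one_mem_U10 _ (fun S => 2 ∈ S ∧ (x ∈ S ∧ 6 ≤ S.card + 1)) (by
      intro S hS
      rw [card_insert_of_notMem (not_mem_of_sub_erase hS)]
      simp only [mem_insert]
      tauto),
    peelMem _ two_mem_e1 _ (fun S => x ∈ S ∧ 6 ≤ S.card + 2) (by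
      intro S hS
      rw [card_insert_of_notMem (not_mem_of_sub_erase hS)]
      simp only [mem_insert]
      tauto),
    peelMem _ (w_mem_e12 h3 h10) _ (fun S => 6 ≤ S.card + 3) (by
      intro S hS
      rw [card_insert_of_notMem (not_mem_of_sub_erase hS)]
      all_goals omega),
    threshC, card_e12w h3 h10]
  decide

lemma HC {x w : ℕ} (hx3 : 3 ≤ x) (hx10 : x ≤ 10) (hw3 : 3 ≤ w) (hw10 : w ≤ 10)
    (hxw : x ≠ w) :
    (Hstar.filter (fun S => w ∈ S ∧ x ∈ S)).card = 57 := by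
  have hx1 : x ≠ 1 := by omega
  have hx2 : x ≠ 2 := by omega
  have hw1 : w ≠ 1 := by omega
  have hw2 : w ≠ 2 := by omega
  have h21 : (2:ℕ) ≠ 1 := by omega
  have e0 : Hstar.filter (fun S => w ∈ S ∧ x ∈ S)
      = U10.powerset.filter (fun S => 1 ∈ S ∧ (2 ∈ S ∧ (w ∈ S ∧ (x ∈ S ∧ 6 ≤ S.card + 0)))) := by
    rw [Hstar, filter_filter]
    apply filter_congr; intro S _; constructor
    · rintro ⟨⟨h, h1, h2⟩, hw, hx⟩; exact ⟨h1, h2, hw, hx, by omega⟩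
    · rintro ⟨h1, h2, hw, hx, h⟩; exact ⟨⟨by omega, h1, h2⟩, hw, hx⟩
  rw [e0,
    peelMem U10 one_mem_U10 _ (fun S => 2 ∈ S ∧ (w ∈ S ∧ (x ∈ S ∧ 6 ≤ S.card + 1))) (by
      intro S hS
      rw [card_insert_of_notMem (not_mem_of_sub_erase hS)]
      simp only [mem_insert]
      tauto),
    peelMem _ two_mem_e1 _ (fun S => w ∈ S ∧ (x ∈ S ∧ 6 ≤ S.card + 2)) (by
      intro S hS
      rw [card_insert_of_notMem (not_mem_of_sub_erase hS)]
      simp only [mem_insert]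
      tauto),
    peelMem _ (w_mem_e12 hw3 hw10) _ (fun S => x ∈ S ∧ 6 ≤ S.card + 3) (by
      intro S hS
      rw [card_insert_of_notMem (not_mem_of_sub_erase hS)]
      simp only [mem_insert]
      tauto),
    peelMem _ (x_mem_e12w hx3 hx10 hxw) _ (fun S => 6 ≤ S.card + 4) (by
      intro S hS
      rw [card_insert_of_notMem (not_mem_of_sub_erase hS)]
      all_goals omega),
    threshC, card_e12wx hx3 hx10 hxw hw3 hw10]
  decide


/-! ### Class cardinalities -/

lemma card_U10 : U10.card = 10 := by decide

lemma cls_disj {w : ℕ} :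
    Disjoint ((U10.erase w).powerset) (Hstar.filter (fun S => w ∈ S)) := by
  rw [disjoint_left]
  intro S hS hS'
  exact (mem_erase.mp (mem_powerset.mp hS ((mem_filter.mp hS').2))).1 rfl

lemma filtH_card {w : ℕ} (hw : w ∈ U10) :
    (Hstar.filter (fun S => w ∈ S)).card = cH w := by
  rw [mem_U10] at hw
  by_cases hw2 : w ≤ 2
  · rw [HBlow (by omega), HA]
    simp [cH, hw2]
  · rw [HB (by omega) hw.2]
    simp [cH, hw2]

lemma cls_card {w : ℕ} (hw : w ∈ U10) : (cls w).card = 512 + cH w := by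
  rw [cls, card_union_of_disjoint cls_disj, card_powerset, card_erase_of_mem hw,
    card_U10, filtH_card hw]
  norm_num

lemma cls_count {x w : ℕ} (hx : x ∈ U10) (hw : w ∈ U10) :
    ((cls w).filter (fun S => x ∈ S)).card = cK x w := by
  have hx' := mem_U10.mp hx
  have hw' := mem_U10.mp hw
  rw [cls, filter_union,
    card_union_of_disjoint (cls_disj.mono (filter_subset _ _) (filter_subset _ _)),
    filter_filter]
  by_cases hxw : x = w
  · subst hxw
    have h1 : ((U10.erase x).powerset.filter (fun S => x ∈ S)) = ∅ := by
      apply filter_false_of_mem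
      intro S hS hxS
      exact (mem_erase.mp (mem_powerset.mp hS hxS)).1 rfl
    have h2 : (Hstar.filter (fun S => x ∈ S ∧ x ∈ S)) = Hstar.filter (fun S => x ∈ S) := by
      apply filter_congr; intro S _; tauto
    rw [h1, h2, filtH_card hx]
    simp [cK, cH]
  · have hcube : ((U10.erase w).powerset.filter (fun S => x ∈ S)).card = 256 := by
      rw [cube_mem_count _ (mem_erase.mpr ⟨hxw, hx⟩), card_erase_of_mem hw, card_U10]
      norm_num
    rw [hcube]
    by_cases hx2 : x ≤ 2
    · by_cases hw2 : w ≤ 2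
      · have h2 : (Hstar.filter (fun S => w ∈ S ∧ x ∈ S)) = Hstar := by
          apply filter_true_of_mem
          intro S hS
          rcases mem_Hstar.mp hS with ⟨-, -, m1, m2⟩
          constructor
          · rcases (show w = 1 ∨ w = 2 by omega) with rfl | rfl <;> assumption
          · rcases (show x = 1 ∨ x = 2 by omega) with rfl | rfl <;> assumption
        rw [h2, HA]
        simp [cK, hxw, hx2, hw2]
      · have h2 : (Hstar.filter (fun S => w ∈ S ∧ x ∈ S)) = Hstar.filter (fun S => w ∈ S) := by
          apply filter_congr; intro S hS
          rcases mem_Hstar.mp hS with ⟨-, -, m1, m2⟩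
          have : x ∈ S := by
            rcases (show x = 1 ∨ x = 2 by omega) with rfl | rfl <;> assumption
          tauto
        rw [h2, HB (by omega) hw'.2]
        simp [cK, hxw, hx2, hw2]
    · by_cases hw2 : w ≤ 2
      · have h2 : (Hstar.filter (fun S => w ∈ S ∧ x ∈ S)) = Hstar.filter (fun S => x ∈ S) := by
          apply filter_congr; intro S hS
          rcases mem_Hstar.mp hS with ⟨-, -, m1, m2⟩
          have : w ∈ S := by
            rcases (show w = 1 ∨ w = 2 by omega) with rfl | rfl <;> assumption
          tauto
        rw [h2, HB (by omega) hx'.2]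
        have : ¬ (x ≤ 2 ∧ w ≤ 2) := by omega
        simp [cK, hxw, this, hx2, hw2]
      · rw [HC (by omega) hx'.2 (by omega) hw'.2 hxw]
        have h1 : ¬ (x ≤ 2 ∧ w ≤ 2) := by omega
        have h2 : ¬ (x ≤ 2 ∨ w ≤ 2) := by omega
        simp [cK, hxw, h1, h2]

/-! ### The three parts of FF -/

def P2 : Finset (Finset ℕ) := U10.powerset.image (fun X => X ∪ Zt)
def P3 : Finset (Finset ℕ) :=
  Zt.biUnion (fun i => (cls (wOf i)).image (fun X => X ∪ Zt.erase i))

lemma FF_eq : FF = (Hstar ∪ P2) ∪ P3 := rfl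

lemma eleven_not_U10 {S : Finset ℕ} (hS : S ⊆ U10) {a : ℕ} (ha : 11 ≤ a) : a ∉ S := by
  intro h
  have := mem_U10.mp (hS h)
  omega

lemma disj_H_P2 : Disjoint Hstar P2 := by
  rw [disjoint_left]
  rintro S hS hS2
  rcases mem_image.mp hS2 with ⟨X, -, rfl⟩
  exact eleven_not_U10 (mem_Hstar.mp hS).1 (le_refl 11)
    (mem_union_right _ (mem_Zt.mpr (by omega)))

lemma witness_mem_erase {i : ℕ} : (if i = 11 then 12 else 11) ∈ Zt.erase i := by
  rw [mem_erase, mem_Zt]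
  split_ifs with h <;> omega

lemma disj_H_P3 : Disjoint Hstar P3 := by
  rw [disjoint_left]
  rintro S hS hS3
  rcases mem_biUnion.mp hS3 with ⟨i, hi, hS3'⟩
  rcases mem_image.mp hS3' with ⟨X, -, rfl⟩
  have hw := witness_mem_erase (i := i)
  have hmem : (if i = 11 then 12 else 11) ∈ X ∪ Zt.erase i := mem_union_right _ hw
  refine eleven_not_U10 (mem_Hstar.mp hS).1 ?_ hmem
  split_ifs <;> omega

lemma disj_P2_P3 : Disjoint P2 P3 := by
  rw [disjoint_left]
  rintro S hS2 hS3
  rcases mem_image.mp hS2 with ⟨X, hX, rfl⟩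
  rcases mem_biUnion.mp hS3 with ⟨i, hi, hS3'⟩
  rcases mem_image.mp hS3' with ⟨Y, hY, heq⟩
  have hiS : i ∈ X ∪ Zt := mem_union_right _ hi
  rw [← heq] at hiS
  rcases mem_union.mp hiS with h | h
  · exact eleven_not_U10 (cls_sub hY) (mem_Zt.mp hi).1 h
  · exact (mem_erase.mp h).1 rfl

lemma disj_P3_pieces {i j : ℕ} (hi : i ∈ Zt) (hj : j ∈ Zt) (hij : i ≠ j) :
    Disjoint ((cls (wOf i)).image (fun X => X ∪ Zt.erase i))
      ((cls (wOf j)).image (fun X => X ∪ Zt.erase j)) := by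
  rw [disjoint_left]
  rintro S hSi hSj
  rcases mem_image.mp hSi with ⟨X, hX, rfl⟩
  rcases mem_image.mp hSj with ⟨Y, hY, heq⟩
  have hjS : j ∈ X ∪ Zt.erase i :=
    mem_union_right _ (mem_erase.mpr ⟨fun h => hij h.symm, hj⟩)
  rw [← heq] at hjS
  rcases mem_union.mp hjS with h | h
  · exact eleven_not_U10 (cls_sub hY) (mem_Zt.mp hj).1 h
  · exact (mem_erase.mp h).1 rfl

/-! ### Cardinality of FF -/

lemma wOf_memU10 {i : ℕ} (hi : i ∈ Zt) : wOf i ∈ U10 := by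
  rw [mem_Zt] at hi
  rw [mem_U10]
  simp only [wOf]
  split_ifs <;> omega

lemma P2_card : P2.card = 1024 := by
  rw [P2, card_image_of_injOn, card_powerset, card_U10]
  · norm_num
  · intro X hX Y hY h
    exact union_inj Subset.rfl (mem_powerset.mp hX) (mem_powerset.mp hY) h

lemma im_card {i : ℕ} (hi : i ∈ Zt) :
    ((cls (wOf i)).image (fun X => X ∪ Zt.erase i)).card = 512 + cH (wOf i) := by
  rw [card_image_of_injOn, cls_card (wOf_memU10 hi)]
  intro X hX Y hY h
  exact union_inj (erase_subset _ _) (cls_sub hX) (cls_sub hY) h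

lemma P3_card : P3.card = ∑ i ∈ Zt, (512 + cH (wOf i)) := by
  rw [P3, card_biUnion (fun i hi j hj hij => disj_P3_pieces hi hj hij)]
  exact sum_congr rfl fun i hi => im_card hi

lemma fiber_card {w : ℕ} (hw : w ∈ Finset.Icc 1 10) :
    (Zt.filter (fun i => wOf i = w)).card = nW w := by
  rw [Finset.mem_Icc] at hw
  obtain ⟨h1, h2⟩ := hw
  interval_cases w <;> decide

lemma sum_zt (g : ℕ → ℕ) :
    ∑ i ∈ Zt, g (wOf i) = ∑ w ∈ Finset.Icc 1 10, nW w * g w := by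
  rw [← sum_fiberwise_of_maps_to (fun i hi => by
        have := wOf_memU10 hi; rwa [U10] at this) (fun i => g (wOf i))]
  apply sum_congr rfl
  intro w hw
  rw [sum_congr rfl (fun i hi => by rw [(mem_filter.mp hi).2]), sum_const,
    fiber_card hw, smul_eq_mul]

lemma FF_card : FF.card = 130043 := by
  rw [FF_eq, card_union_of_disjoint (disjoint_union_left.mpr ⟨disj_H_P3, disj_P2_P3⟩),
    card_union_of_disjoint disj_H_P2, HA, P2_card, P3_card, sum_zt (fun w => 512 + cH w)]
  decide

/-! ### Element counts in FF -/

lemma P2_count {x : ℕ} (hx : x ∈ U10) :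
    (P2.filter (fun S => x ∈ S)).card = 512 := by
  have hx10 := mem_U10.mp hx
  rw [P2, filter_image]
  have hcongr : (U10.powerset.filter (fun X => x ∈ X ∪ Zt))
      = U10.powerset.filter (fun X => x ∈ X) := by
    apply filter_congr
    intro X _
    simp only [mem_union]
    constructor
    · rintro (h | h)
      · exact h
      · have := mem_Zt.mp h; omega
    · exact Or.inl
  rw [hcongr, card_image_of_injOn, cube_mem_count U10 hx, card_U10]
  · norm_num
  · intro X hX Y hY h
    exact union_inj Subset.rfl
      (mem_powerset.mp (filter_subset _ _ hX))
      (mem_powerset.mp (filter_subset _ _ hY)) h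

lemma im_count {x i : ℕ} (hx : x ∈ U10) (hi : i ∈ Zt) :
    ((((cls (wOf i)).image (fun X => X ∪ Zt.erase i)).filter (fun S => x ∈ S)).card)
      = cK x (wOf i) := by
  have hx10 := mem_U10.mp hx
  rw [filter_image]
  have hcongr : ((cls (wOf i)).filter (fun X => x ∈ X ∪ Zt.erase i))
      = (cls (wOf i)).filter (fun X => x ∈ X) := by
    apply filter_congr
    intro X _
    simp only [mem_union]
    constructor
    · rintro (h | h)
      · exact h
      · have := mem_Zt.mp (erase_subset _ _ h); omega
    · exact Or.inl
  rw [hcongr, card_image_of_injOn, cls_count hx (wOf_memU10 hi)]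
  intro X hX Y hY h
  exact union_inj (erase_subset _ _)
    (cls_sub (filter_subset _ _ hX)) (cls_sub (filter_subset _ _ hY)) h

lemma FF_count {x : ℕ} (hx : x ∈ U10) :
    (FF.filter (fun S => x ∈ S)).card
      = cH x + 512 + ∑ w ∈ Finset.Icc 1 10, nW w * cK x w := by
  rw [FF_eq, filter_union, filter_union,
    card_union_of_disjoint (((disjoint_union_left.mpr ⟨disj_H_P3, disj_P2_P3⟩)).mono
      (union_subset_union (filter_subset _ _) (filter_subset _ _))
      (filter_subset _ _)),
    card_union_of_disjoint (disj_H_P2.mono (filter_subset _ _) (filter_subset _ _)),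
    filtH_card hx, P2_count hx, P3, filter_biUnion,
    card_biUnion (fun i hi j hj hij =>
      (disj_P3_pieces hi hj hij).mono (filter_subset _ _) (filter_subset _ _)),
    sum_congr rfl (fun i hi => im_count hx hi), sum_zt (fun w => cK x w)]

/-! ### The witness family A -/

def Afam : Finset (Finset ℕ) :=
  ((Finset.Icc 3 10).powersetCard 4).image (fun T => insert 1 (insert 2 T))

lemma Afam_shape {T : Finset ℕ} (hT : T ∈ (Finset.Icc 3 10).powersetCard 4) :
    T ⊆ Finset.Icc 3 10 ∧ T.card = 4 := mem_powersetCard.mp hT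

lemma two_not_mem {T : Finset ℕ} (hT : T ⊆ Finset.Icc 3 10) : 2 ∉ T := by
  intro h
  have := Finset.mem_Icc.mp (hT h)
  omega

lemma one_not_mem {T : Finset ℕ} (hT : T ⊆ Finset.Icc 3 10) : 1 ∉ insert 2 T := by
  rw [mem_insert]
  rintro (h | h)
  · omega
  · have := Finset.mem_Icc.mp (hT h); omega

lemma Afam_recover {T : Finset ℕ} (hT : T ⊆ Finset.Icc 3 10) :
    ((insert 1 (insert 2 T)).erase 1).erase 2 = T := by
  rw [erase_insert (one_not_mem hT), erase_insert (two_not_mem hT)]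

lemma Afam_card : Afam.card = 70 := by
  rw [Afam, card_image_of_injOn, card_powersetCard]
  · decide
  · intro T hT T' hT' h
    have h1 := Afam_recover (Afam_shape (mem_coe.mp hT)).1
    have h2 := Afam_recover (Afam_shape (mem_coe.mp hT')).1
    have h' : insert 1 (insert 2 T) = insert 1 (insert 2 T') := h
    rw [← h1, ← h2, h']

lemma Afam_mem_card {T : Finset ℕ} (hT : T ∈ (Finset.Icc 3 10).powersetCard 4) :
    (insert 1 (insert 2 T)).card = 6 := by
  obtain ⟨hsub, hcard⟩ := Afam_shape hT
  rw [card_insert_of_notMem (one_not_mem hsub), card_insert_of_notMem (two_not_mem hsub),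
    hcard]

lemma Afam_mem_sub {T : Finset ℕ} (hT : T ∈ (Finset.Icc 3 10).powersetCard 4) :
    insert 1 (insert 2 T) ⊆ Finset.Icc 1 10 := by
  obtain ⟨hsub, -⟩ := Afam_shape hT
  refine insert_subset (by simp) (insert_subset (by simp) ?_)
  intro a ha
  have := Finset.mem_Icc.mp (hsub ha)
  rw [Finset.mem_Icc]
  omega

lemma Afam_sub_Hstar : Afam ⊆ Hstar := by
  intro S hS
  rcases mem_image.mp hS with ⟨T, hT, rfl⟩
  rw [mem_Hstar]
  refine ⟨Afam_mem_sub hT, by rw [Afam_mem_card hT], mem_insert_self _ _,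
    mem_insert_of_mem (mem_insert_self _ _)⟩

lemma Afam_sub_FF : Afam ⊆ FF := fun S hS =>
  mem_union_left _ (mem_union_left _ (Afam_sub_Hstar hS))

lemma S1_mem : insert 1 (insert 2 ({3,4,5,6} : Finset ℕ)) ∈ Afam :=
  mem_image.mpr ⟨{3,4,5,6}, by decide, rfl⟩

lemma S2_mem : insert 1 (insert 2 ({7,8,9,10} : Finset ℕ)) ∈ Afam :=
  mem_image.mpr ⟨{7,8,9,10}, by decide, rfl⟩

lemma famU : famUniverse Afam = Finset.Icc 1 10 := by
  ext x
  rw [famUniverse, Finset.mem_sup]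
  constructor
  · rintro ⟨S, hS, haS⟩
    rcases mem_image.mp hS with ⟨T, hT, rfl⟩
    exact Afam_mem_sub hT haS
  · intro hx
    rw [Finset.mem_Icc] at hx
    by_cases h6 : x ≤ 6
    · refine ⟨_, S1_mem, ?_⟩
      show x ∈ insert 1 (insert 2 ({3,4,5,6} : Finset ℕ))
      simp only [mem_insert, mem_singleton]
      omega
    · refine ⟨_, S2_mem, ?_⟩
      show x ∈ insert 1 (insert 2 ({7,8,9,10} : Finset ℕ))
      simp only [mem_insert, mem_singleton]
      omega

lemma Afam_isK : IsKFamily 6 10 Afam := by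
  constructor
  · intro S hS
    rcases mem_image.mp hS with ⟨T, hT, rfl⟩
    exact ⟨Afam_mem_card hT, Afam_mem_sub hT⟩
  · exact famU

end FCproof

/-- FC(6, 10) ≥ 71: there is a Non-FC family of 70 distinct 6-element subsets of
{1, …, 10} with universe {1, …, 10}. -/
theorem FC_lower_bound_6_10 :
    ∃ A : Finset (Finset ℕ), A.card = 70 ∧ IsKFamily 6 10 A ∧ ¬ IsFC A := by
  refine ⟨FCproof.Afam, FCproof.Afam_card, FCproof.Afam_isK, ?_⟩
  intro h
  obtain ⟨x, hxU, hineq⟩ := h FCproof.FF FCproof.FF_unionClosed FCproof.Afam_sub_FF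
  rw [FCproof.famU] at hxU
  have hx' : x ∈ FCproof.U10 := hxU
  rw [FCproof.FF_card, FCproof.FF_count hx'] at hineq
  rw [Finset.mem_Icc] at hxU
  obtain ⟨h1, h2⟩ := hxU
  interval_cases x <;> revert hineq <;> decide
end

section
/- For each pair (k, n) ∈ {(5, 6), (6, 7), (7, 8), (7, 9)}, the family consisting of all k-element subsets of {1,…,n} is Non-FC; consequently FC(k, n) is undefined for these pairs (no family of distinct k-element subsets of [n] with universe [n] of any size is guaranteed to be FC). -/
/-!
Adjoin to `[n]` the markers `n + 1, …, 2n`, the marker `n + y` standing for `y`, and consider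
the sets `S ∪ M` with `S ⊆ [n]` and `M` a set of markers, where `S` is arbitrary if `|M| ≥ 2`,
`S` must have at least `k` elements if `M = ∅`, and `S` must have at least `k` elements or
avoid `y` if `M = {n + y}`. This family is union-closed and contains every `k`-subset of `[n]`.
On each fibre with `|M| ≥ 2` every `x ∈ [n]` lies in exactly half of the sets; on the remaining
`n + 1` fibres a finite count shows that, for these four pairs `(k, n)`, every `x ∈ [n]` lies
in fewer than half of the sets. So no element of `[n]` is in half of the family.
-/

open Finset

section FiberUnion

variable {α : Type*} [DecidableEq α]

def fiberUnion (Y : Finset α) (G : Finset α → Finset (Finset α)) : Finset (Finset α) :=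
  Y.powerset.biUnion fun M => (G M).image (· ∪ M)

lemma mem_fiberUnion {Y T : Finset α} {G : Finset α → Finset (Finset α)} :
    T ∈ fiberUnion Y G ↔ ∃ M ⊆ Y, ∃ S ∈ G M, S ∪ M = T := by
  simp [fiberUnion]

lemma union_sdiff_eq_and_union_inter_eq {S M Y : Finset α} (hS : Disjoint S Y) (hM : M ⊆ Y) :
    (S ∪ M) \ Y = S ∧ (S ∪ M) ∩ Y = M := by
  constructor
  · rw [union_sdiff_distrib, hS.sdiff_eq_left, sdiff_eq_empty_iff_subset.mpr hM, union_empty]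
  · rw [union_inter_distrib_right, disjoint_iff_inter_eq_empty.mp hS, inter_eq_left.mpr hM, empty_union]

lemma eq_and_eq_of_union_eq_union {S₁ S₂ M₁ M₂ Y : Finset α} (hS₁ : Disjoint S₁ Y)
    (hS₂ : Disjoint S₂ Y) (hM₁ : M₁ ⊆ Y) (hM₂ : M₂ ⊆ Y) (h : S₁ ∪ M₁ = S₂ ∪ M₂) :
    S₁ = S₂ ∧ M₁ = M₂ := by
  obtain ⟨h₁, h₁'⟩ := union_sdiff_eq_and_union_inter_eq hS₁ hM₁
  obtain ⟨h₂, h₂'⟩ := union_sdiff_eq_and_union_inter_eq hS₂ hM₂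
  exact ⟨h₁ ▸ h₂ ▸ h ▸ rfl, h₁' ▸ h₂' ▸ h ▸ rfl⟩

variable (Y : Finset α) {G : Finset α → Finset (Finset α)}

lemma card_fiberUnion (hG : ∀ M ⊆ Y, ∀ S ∈ G M, Disjoint S Y) :
    #(fiberUnion Y G) = ∑ M ∈ Y.powerset, #(G M) := by
  rw [fiberUnion, card_biUnion]
  · refine sum_congr rfl fun M hM => card_image_of_injOn fun S₁ h₁ S₂ h₂ h => ?_
    rw [mem_powerset] at hM
    exact (eq_and_eq_of_union_eq_union (hG M hM S₁ h₁) (hG M hM S₂ h₂) hM hM h).1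
  · intro M₁ hM₁ M₂ hM₂ hne
    rw [mem_coe, mem_powerset] at hM₁ hM₂
    refine disjoint_left.mpr fun T hT₁ hT₂ => hne ?_
    obtain ⟨S₁, h₁, rfl⟩ := mem_image.mp hT₁
    obtain ⟨S₂, h₂, h⟩ := mem_image.mp hT₂
    exact (eq_and_eq_of_union_eq_union (hG M₂ hM₂ S₂ h₂) (hG M₁ hM₁ S₁ h₁) hM₂ hM₁ h).2.symm

lemma filter_mem_fiberUnion {x : α} (hx : x ∉ Y) :
    {T ∈ fiberUnion Y G | x ∈ T} = fiberUnion Y fun M => {S ∈ G M | x ∈ S} := by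
  ext T
  simp only [mem_filter, mem_fiberUnion]
  constructor
  · rintro ⟨⟨M, hM, S, hS, rfl⟩, hxT⟩
    exact ⟨M, hM, S, ⟨hS, (mem_union.mp hxT).resolve_right fun h => hx (hM h)⟩, rfl⟩
  · rintro ⟨M, hM, S, ⟨hS, hxS⟩, rfl⟩
    exact ⟨⟨M, hM, S, hS, rfl⟩, mem_union_left M hxS⟩

end FiberUnion

lemma unionClosed_fiberUnion {Y : Finset ℕ} {G : Finset ℕ → Finset (Finset ℕ)}
    (hne : ∃ M ⊆ Y, (G M).Nonempty)
    (hG : ∀ M₁ M₂ S₁ S₂, S₁ ∈ G M₁ → S₂ ∈ G M₂ → S₁ ∪ S₂ ∈ G (M₁ ∪ M₂)) :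
    UnionClosed (fiberUnion Y G) := by
  obtain ⟨M, hM, S, hS⟩ := hne
  refine ⟨⟨S ∪ M, mem_fiberUnion.mpr ⟨M, hM, S, hS, rfl⟩⟩, fun T₁ hT₁ T₂ hT₂ => ?_⟩
  obtain ⟨M₁, hM₁, S₁, hS₁, rfl⟩ := mem_fiberUnion.mp hT₁
  obtain ⟨M₂, hM₂, S₂, hS₂, rfl⟩ := mem_fiberUnion.mp hT₂
  exact mem_fiberUnion.mpr
    ⟨M₁ ∪ M₂, union_subset hM₁ hM₂, S₁ ∪ S₂, hG _ _ _ _ hS₁ hS₂, union_union_union_comm _ _ _ _⟩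

lemma two_mul_card_filter_mem_powerset {α : Type*} [DecidableEq α] {s : Finset α} {x : α}
    (hx : x ∈ s) : 2 * #{S ∈ s.powerset | x ∈ S} = #s.powerset := by
  have hswap : #{S ∈ s.powerset | x ∈ S} = #{S ∈ s.powerset | x ∉ S} := by
    refine card_bij' (fun S _ => S.erase x) (fun S _ => insert x S) ?_ ?_ ?_ ?_
    · simp only [mem_filter, mem_powerset]
      exact fun S hS => ⟨(erase_subset x S).trans hS.1, notMem_erase x S⟩
    · simp only [mem_filter, mem_powerset]
      exact fun S hS => ⟨insert_subset hx hS.1, mem_insert_self x S⟩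
    · exact fun S hS => insert_erase (mem_filter.mp hS).2
    · exact fun S hS => erase_insert (mem_filter.mp hS).2
  rw [two_mul]
  nth_rewrite 2 [hswap]
  exact card_filter_add_card_filter_not _

section Construction

variable (k n : ℕ)

def markers : Finset ℕ := Icc (n + 1) (2 * n)

def fiber (M : Finset ℕ) : Finset (Finset ℕ) :=
  (Icc 1 n).powerset.filter
    fun S => 2 ≤ #M ∨ k ≤ #S ∨ (M.Nonempty ∧ ∀ a ∈ M, a - n ∉ S)

def rareFamily : Finset (Finset ℕ) := fiberUnion (markers n) (fiber k n)

def LowFibersRare : Prop :=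
  ∀ x ∈ Icc 1 n,
    2 * ∑ M ∈ (markers n).powerset with #M < 2, #{S ∈ fiber k n M | x ∈ S} <
      ∑ M ∈ (markers n).powerset with #M < 2, #(fiber k n M)

variable {k n}

lemma disjoint_markers_of_mem_fiber {M S : Finset ℕ} (hS : S ∈ fiber k n M) :
    Disjoint S (markers n) := by
  rw [fiber, mem_filter, mem_powerset] at hS
  refine disjoint_left.mpr fun a ha ha' => ?_
  have := mem_Icc.mp (hS.1 ha)
  have := mem_Icc.mp ha'
  omega

lemma fiber_of_two_le_card {M : Finset ℕ} (hM : 2 ≤ #M) : fiber k n M = (Icc 1 n).powerset :=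
  filter_true_of_mem fun _ _ => Or.inl hM

lemma union_mem_fiber {M₁ M₂ S₁ S₂ : Finset ℕ} (h₁ : S₁ ∈ fiber k n M₁)
    (h₂ : S₂ ∈ fiber k n M₂) : S₁ ∪ S₂ ∈ fiber k n (M₁ ∪ M₂) := by
  simp only [fiber, mem_filter, mem_powerset] at h₁ h₂ ⊢
  refine ⟨union_subset h₁.1 h₂.1, ?_⟩
  have hM₁ : #M₁ ≤ #(M₁ ∪ M₂) := card_le_card subset_union_left
  have hM₂ : #M₂ ≤ #(M₁ ∪ M₂) := card_le_card subset_union_right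
  have hS₁ : #S₁ ≤ #(S₁ ∪ S₂) := card_le_card subset_union_left
  have hS₂ : #S₂ ≤ #(S₁ ∪ S₂) := card_le_card subset_union_right
  rcases h₁.2 with h | h | ⟨hne₁, hav₁⟩
  · exact Or.inl (h.trans hM₁)
  · exact Or.inr (Or.inl (h.trans hS₁))
  rcases h₂.2 with h | h | ⟨hne₂, hav₂⟩
  · exact Or.inl (h.trans hM₂)
  · exact Or.inr (Or.inl (h.trans hS₂))
  by_cases hc : 2 ≤ #(M₁ ∪ M₂)
  · exact Or.inl hc
  -- Otherwise `M₁ = M₂` is a single marker, avoided by both `S₁` and `S₂`.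
  have hle : #(M₁ ∪ M₂) ≤ 1 := by omega
  have e₁ := eq_of_subset_of_card_le subset_union_left (hle.trans hne₁.card_pos)
  have e₂ := eq_of_subset_of_card_le subset_union_right (hle.trans hne₂.card_pos)
  refine Or.inr (Or.inr ⟨hne₁.mono subset_union_left, fun a ha => ?_⟩)
  rw [mem_union, not_or]
  exact ⟨hav₁ a (e₁ ▸ ha), hav₂ a (e₂ ▸ ha)⟩

lemma unionClosed_rareFamily (hkn : k ≤ n) : UnionClosed (rareFamily k n) := by
  refine unionClosed_fiberUnion ⟨∅, empty_subset _, Icc 1 n, ?_⟩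
    fun _ _ _ _ => union_mem_fiber
  simp only [fiber, mem_filter, mem_powerset, Nat.card_Icc]
  exact ⟨Subset.rfl, Or.inr (Or.inl (by omega))⟩

lemma powersetCard_subset_rareFamily : (Icc 1 n).powersetCard k ⊆ rareFamily k n := by
  intro S hS
  rw [mem_powersetCard] at hS
  refine mem_fiberUnion.mpr ⟨∅, empty_subset _, S, ?_, union_empty S⟩
  simp only [fiber, mem_filter, mem_powerset]
  exact ⟨hS.1, Or.inr (Or.inl hS.2.ge)⟩

lemma two_mul_card_filter_mem_rareFamily_lt (hrare : LowFibersRare k n) {x : ℕ}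
    (hx : x ∈ Icc 1 n) : 2 * #{T ∈ rareFamily k n | x ∈ T} < #(rareFamily k n) := by
  have hx' : x ∉ markers n := fun h => by
    have := mem_Icc.mp h
    have := mem_Icc.mp hx
    omega
  have hG : ∀ M ⊆ markers n, ∀ S ∈ fiber k n M, Disjoint S (markers n) :=
    fun _ _ _ => disjoint_markers_of_mem_fiber
  have hG' : ∀ M ⊆ markers n, ∀ S ∈ {S ∈ fiber k n M | x ∈ S}, Disjoint S (markers n) :=
    fun M hM S hS => hG M hM S (mem_filter.mp hS).1
  have hhigh : 2 * ∑ M ∈ (markers n).powerset with ¬ #M < 2, #{S ∈ fiber k n M | x ∈ S} =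
      ∑ M ∈ (markers n).powerset with ¬ #M < 2, #(fiber k n M) := by
    refine mul_sum _ _ 2 ▸ sum_congr rfl fun M hM => ?_
    rw [fiber_of_two_le_card (not_lt.mp (mem_filter.mp hM).2)]
    exact two_mul_card_filter_mem_powerset hx
  rw [rareFamily, filter_mem_fiberUnion _ hx', card_fiberUnion _ hG', card_fiberUnion _ hG,
    ← sum_filter_add_sum_filter_not _ (fun M => #M < 2) fun M => #(fiber k n M),
    ← sum_filter_add_sum_filter_not _ (fun M => #M < 2) fun M => #{S ∈ fiber k n M | x ∈ S},
    mul_add, hhigh]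
  exact Nat.add_lt_add_right (hrare x hx) _

theorem not_isFC_of_lowFibersRare (hkn : k ≤ n) (hrare : LowFibersRare k n)
    {A : Finset (Finset ℕ)} (hA : IsKFamily k n A) : ¬ IsFC A := by
  intro hFC
  have hsub : A ⊆ rareFamily k n := fun S hS =>
    powersetCard_subset_rareFamily (mem_powersetCard.mpr ⟨(hA.1 S hS).2, (hA.1 S hS).1⟩)
  obtain ⟨x, hx, hhalf⟩ := hFC _ (unionClosed_rareFamily hkn) hsub
  rw [hA.2] at hx
  exact (two_mul_card_filter_mem_rareFamily_lt hrare hx).not_ge hhalf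

end Construction

lemma isKFamily_powersetCard {k n : ℕ} (hk : 0 < k) (hkn : k ≤ n) :
    IsKFamily k n ((Icc 1 n).powersetCard k) := by
  refine ⟨fun S hS => (mem_powersetCard.mp hS).symm, ?_⟩
  obtain ⟨j, rfl⟩ := Nat.exists_eq_add_of_lt hk
  exact powersetCard_sup _ _ (by rw [Nat.card_Icc]; omega)

lemma lowFibersRare_five_six : LowFibersRare 5 6 := by
  unfold LowFibersRare; decide

lemma lowFibersRare_six_seven : LowFibersRare 6 7 := by
  unfold LowFibersRare; decide

set_option maxRecDepth 100000 in
lemma lowFibersRare_seven_eight : LowFibersRare 7 8 := by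
  unfold LowFibersRare; decide

set_option maxRecDepth 100000 in
lemma lowFibersRare_seven_nine : LowFibersRare 7 9 := by
  unfold LowFibersRare; decide

/-- For (k, n) ∈ {(5, 6), (6, 7), (7, 8), (7, 9)}, the family of all k-element
subsets of {1, …, n} is Non-FC; consequently no family of distinct k-element
subsets of [n] with universe [n] (of any size) is FC, so FC(k, n) is undefined. -/
theorem FC_undefined :
    ∀ p ∈ [(5, 6), (6, 7), (7, 8), (7, 9)],
      ¬ IsFC ((Finset.Icc 1 p.2).powersetCard p.1) ∧
      ∀ A : Finset (Finset ℕ), IsKFamily p.1 p.2 A → ¬ IsFC A := by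
  have key : ∀ {k n : ℕ}, 0 < k → k ≤ n → LowFibersRare k n →
      ¬ IsFC ((Icc 1 n).powersetCard k) ∧ ∀ A, IsKFamily k n A → ¬ IsFC A :=
    fun hk hkn hrare => ⟨not_isFC_of_lowFibersRare hkn hrare (isKFamily_powersetCard hk hkn),
      fun _ => not_isFC_of_lowFibersRare hkn hrare⟩
  intro p hp
  simp only [List.mem_cons, List.not_mem_nil, or_false] at hp
  rcases hp with rfl | rfl | rfl | rfl
  exacts [key (by norm_num) (by norm_num) lowFibersRare_five_six,
    key (by norm_num) (by norm_num) lowFibersRare_six_seven,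
    key (by norm_num) (by norm_num) lowFibersRare_seven_eight,
    key (by norm_num) (by norm_num) lowFibersRare_seven_nine]
end
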